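/- arXiv:1307.3929 — 4 statements merged into one kernel-verified Lean document; each statement's English description precedes it below -/
import Mathlib

section
/- The quotient space X_T = T³ / ι is simply connected. -/
/-- The 3-torus, the product of three copies of the unit circle in `ℂ`. -/
abbrev T3 : Type := Circle × Circle × Circle

/-- The involution `ι(z₁, z₂, z₃) = (z₁⁻¹, z₂⁻¹, z₃⁻¹)` on the 3-torus, i.e.
complex conjugation in each factor. -/
noncomputable def torusInv : T3 → T3 := fun p => (p.1⁻¹, p.2.1⁻¹, p.2.2⁻¹)

/-- The quotient space `X_T = T³ / ι` of the 3-torus by the equivalence relation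
identifying each point `p` with `ι p`, equipped with the quotient topology. -/
abbrev XT : Type := Quot (fun p q : T3 => torusInv p = q)

/-!
Away from the images of the fixed points of `ι`, the quotient map `T³ → X_T` is a double
covering, and over those images it is injective. Hence every path in `X_T` lifts to `T³`: lift
on each component of the set of times avoiding the branch points, and use that the quotient map
is closed to get continuity at the branch times. A loop at the image of `1` thus lifts to a loop
in `T³` at `1`, and further to a path in `ℝ³` from `0` to some `m` with `exp m = 1`. In `ℝ³` this
path is homotopic to the segment from `0` to `m`, whose image in `X_T` is invariant under time
reversal because `ι (exp (t • m)) = exp ((1 - t) • m)`; such a loop is null-homotopic.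
-/

open Set Function Topology Filter unitInterval

section Lifting

variable {E X : Type*} [TopologicalSpace E] [TopologicalSpace X] {p : E → X}

theorem IsClosedMap.continuousAt_of_fiber_eq_singleton {A : Type*} [TopologicalSpace A]
    (hp : IsClosedMap p) {Γ : A → E} {t : A} (hΓ : ContinuousAt (p ∘ Γ) t)
    (hfiber : p ⁻¹' {p (Γ t)} = {Γ t}) : ContinuousAt Γ t := by
  have hnhds := isClosedMap_iff_comap_nhds_le.mp hp (y := p (Γ t))
  rw [hfiber, nhdsSet_singleton] at hnhds
  exact (tendsto_comap_iff.mpr hΓ).mono_right hnhds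

theorem IsCoveringMapOn.exists_liftOn_of_convex {V : Type*} [NormedAddCommGroup V]
    [NormedSpace ℝ V] {s : Set X} (hp : IsCoveringMapOn p s) {C : Set V} (hCo : IsOpen C)
    (hCc : Convex ℝ C) {γ : V → X} (hγ : ContinuousOn γ C) (hγs : MapsTo γ C s) {a₀ : V}
    (ha₀ : a₀ ∈ C) {e₀ : E} (he₀ : p e₀ = γ a₀) :
    ∃ f : V → E, ContinuousOn f C ∧ EqOn (p ∘ f) γ C := by
  classical
  have : SimplyConnectedSpace C := by
    have := hCc.contractibleSpace ⟨a₀, ha₀⟩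
    infer_instance
  have := hCo.locallyPathConnectedSpace
  obtain ⟨F, ⟨-, hF⟩, -⟩ := hp.existsUnique_continuousMap_lifts ⟨C.domRestrict γ, hγ.domRestrict⟩
    (a₀ := ⟨a₀, ha₀⟩) he₀ fun a ↦ hγs a.2
  refine ⟨fun a ↦ if h : a ∈ C then F ⟨a, h⟩ else e₀, ?_, fun a ha ↦ ?_⟩
  · rw [continuousOn_iff_continuous_domRestrict]
    convert F.continuous with a
    simp
  · simpa [ha] using congrFun hF ⟨a, ha⟩

theorem IsCoveringMapOn.exists_continuous_lift_of_compl {B : Set X} (hp : IsCoveringMapOn p Bᶜ)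
    (hpc : IsClosedMap p) (hps : Surjective p) (hB : IsClosed B) (hinj : InjOn p (p ⁻¹' B))
    {γ : ℝ → X} (hγ : Continuous γ) : ∃ Γ : ℝ → E, Continuous Γ ∧ p ∘ Γ = γ := by
  classical
  set U := γ ⁻¹' Bᶜ
  have hU : IsOpen U := hB.isOpen_compl.preimage hγ
  have hlift (K : Set ℝ) : ∃ f : ℝ → E, (∃ t ∈ U, connectedComponentIn U t = K) →
      ContinuousOn f K ∧ EqOn (p ∘ f) γ K := by
    by_cases hK : ∃ t ∈ U, connectedComponentIn U t = K
    · obtain ⟨t, ht, rfl⟩ := hK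
      obtain ⟨f, hf⟩ := hp.exists_liftOn_of_convex hU.connectedComponentIn
        isPreconnected_connectedComponentIn.convex hγ.continuousOn
        (fun s hs ↦ connectedComponentIn_subset U t hs) (mem_connectedComponentIn ht)
        (surjInv_eq hps (γ t))
      exact ⟨f, fun _ ↦ hf⟩
    · exact ⟨fun _ ↦ surjInv hps (γ 0), fun h ↦ absurd h hK⟩
  choose f hf using hlift
  set Γ : ℝ → E := fun t ↦ if t ∈ U then f (connectedComponentIn U t) t else surjInv hps (γ t)
  have hΓ : p ∘ Γ = γ := by
    ext t
    by_cases ht : t ∈ U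
    · simpa [Γ, ht] using (hf _ ⟨t, ht, rfl⟩).2 (mem_connectedComponentIn ht)
    · simpa [Γ, ht] using surjInv_eq hps (γ t)
  refine ⟨Γ, continuous_iff_continuousAt.mpr fun t ↦ ?_, hΓ⟩
  by_cases ht : t ∈ U
  · set K := connectedComponentIn U t
    have hK : K ∈ 𝓝 t := hU.connectedComponentIn.mem_nhds (mem_connectedComponentIn ht)
    refine ((hf K ⟨t, ht, rfl⟩).1.continuousAt hK).congr ?_
    filter_upwards [hK] with s hs
    simp [Γ, connectedComponentIn_subset _ _ hs, ← connectedComponentIn_eq hs, K]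
  · refine hpc.continuousAt_of_fiber_eq_singleton (hΓ ▸ hγ.continuousAt) ?_
    have hB : p (Γ t) ∈ B := by simpa [← hΓ, U] using ht
    exact Set.eq_singleton_iff_unique_mem.mpr ⟨rfl, fun e he ↦ hinj (by simp_all) hB he⟩

end Lifting

namespace Function.Involutive

variable {E : Type*} {ι : E → E}

local notation "π" => Quot.mk (fun x y : E => ι x = y)

theorem quot_mk_apply (x : E) : π (ι x) = π x :=
  (Quot.sound (r := fun x y : E => ι x = y) rfl).symm

variable (hι : Involutive ι)
include hι

theorem quot_mk_eq_iff {x y : E} : π x = π y ↔ y = x ∨ y = ι x := by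
  refine ⟨fun h ↦ ?_, ?_⟩
  · replace h := Quot.eqvGen_exact h
    induction h with
    | rel a b hab => exact .inr hab.symm
    | refl => exact .inl rfl
    | symm a b _ ih => rcases ih with rfl | rfl <;> simp [hι _]
    | trans a b c _ _ ihab ihbc =>
      rcases ihab with rfl | rfl <;> rcases ihbc with rfl | rfl <;> simp [hι _]
  · rintro (rfl | rfl)
    exacts [rfl, (quot_mk_apply x).symm]

theorem eq_of_quot_mk_eq_of_isFixedPt {x y : E} (hx : IsFixedPt ι x) (h : π x = π y) : y = x := by
  rcases hι.quot_mk_eq_iff.mp h with h | h <;> rw [h]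
  exact hx

theorem preimage_image_quot_mk (A : Set E) : π ⁻¹' (π '' A) = A ∪ ι ⁻¹' A := by
  ext x
  constructor
  · rintro ⟨a, ha, hax⟩
    rcases hι.quot_mk_eq_iff.mp hax with rfl | rfl
    exacts [.inl ha, .inr (by rwa [mem_preimage, hι])]
  · rintro (hx | hx)
    exacts [⟨x, hx, rfl⟩, ⟨ι x, hx, quot_mk_apply x⟩]

theorem injOn_quot_mk_preimage_fixedPoints :
    InjOn π (π ⁻¹' (π '' fixedPoints ι)) := by
  rintro x ⟨a, ha, hax⟩ y - hxy
  have hx := hι.eq_of_quot_mk_eq_of_isFixedPt ha hax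
  subst hx
  exact (hι.eq_of_quot_mk_eq_of_isFixedPt ha hxy).symm

variable [TopologicalSpace E] (hc : Continuous ι)
include hc

theorem isOpenMap_quot_mk : IsOpenMap π := fun A hA ↦ by
  rw [← isQuotientMap_quot_mk.isOpen_preimage, hι.preimage_image_quot_mk]
  exact hA.union (hA.preimage hc)

theorem isClosedMap_quot_mk : IsClosedMap π := fun A hA ↦ by
  rw [← isQuotientMap_quot_mk.isClosed_preimage, hι.preimage_image_quot_mk]
  exact hA.union (hA.preimage hc)

theorem isOpenEmbedding_restrict_quot_mk {W : Set E} (hW : IsOpen W) (hWι : Disjoint W (ι ⁻¹' W)) :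
    Topology.IsOpenEmbedding (W.domRestrict π) := by
  refine .of_continuous_injective_isOpenMap (continuous_quot_mk.comp continuous_subtype_val)
    (fun a b hab ↦ ?_) ((hι.isOpenMap_quot_mk hc).comp hW.isOpenMap_subtype_val)
  rcases hι.quot_mk_eq_iff.mp hab with h | h
  · exact Subtype.ext h.symm
  · exact (hWι.ne_of_mem a.2 (show ι a ∈ W from h ▸ b.2) rfl).elim

variable [T2Space E]

theorem isCoveringMapOn_quot_mk : IsCoveringMapOn π (π '' fixedPoints ι)ᶜ := by
  refine (hι.isClosedMap_quot_mk hc).isCoveringMapOn_of_isLocalHomeomorphOn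
    (fun x _ ↦ ?_) ((isLocalHomeomorphOn_iff_isOpenEmbedding_restrict _).mpr fun x hx ↦ ?_)
  · obtain ⟨e, rfl⟩ := Quot.exists_rep x
    refine (Set.finite_singleton e |>.insert (ι e)).subset fun y hy ↦ ?_
    rcases hι.quot_mk_eq_iff.mp hy.symm with rfl | rfl <;> simp
  · have hx : ι x ≠ x := fun h ↦ hx ⟨x, h, rfl⟩
    obtain ⟨W₀, W₁, hW₀, hW₁, hxW₀, hxW₁, hW⟩ := t2_separation hx.symm
    refine ⟨W₀ ∩ ι ⁻¹' W₁, (hW₀.inter (hW₁.preimage hc)).mem_nhds ⟨hxW₀, hxW₁⟩,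
      hι.isOpenEmbedding_restrict_quot_mk hc (hW₀.inter (hW₁.preimage hc)) ?_⟩
    exact Set.disjoint_left.mpr fun w hw hιw ↦ hW.ne_of_mem hιw.1 hw.2 rfl

theorem exists_continuous_lift {γ : ℝ → Quot (fun x y : E => ι x = y)} (hγ : Continuous γ) :
    ∃ Γ : ℝ → E, Continuous Γ ∧ π ∘ Γ = γ :=
  (hι.isCoveringMapOn_quot_mk hc).exists_continuous_lift_of_compl (hι.isClosedMap_quot_mk hc)
    Quot.exists_rep ((hι.isClosedMap_quot_mk hc) _ (isClosed_eq hc continuous_id))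
    hι.injOn_quot_mk_preimage_fixedPoints hγ

end Function.Involutive

theorem Path.homotopic_refl_of_symm {X : Type*} [TopologicalSpace X] {x : X} (γ : Path x x)
    (hγ : ∀ t, γ (σ t) = γ t) : γ.Homotopic (Path.refl x) := by
  -- fold the loop onto its first half and shrink that half to the basepoint
  let fold : I × I → ℝ := fun st ↦ (1 - (st.1 : ℝ)) * min (st.2 : ℝ) (1 - st.2)
  refine ⟨⟨⟨⟨fun st ↦ γ.extend (fold st), by fun_prop⟩, fun t ↦ ?_, fun t ↦ ?_⟩, ?_⟩⟩
  · rcases le_total (t : ℝ) (1 - t) with h | h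
    · simp [fold, min_eq_left h]
    · have hmin : min (t : ℝ) (1 - t) = σ t := by rw [min_eq_right h, coe_symm_eq]
      simp only [fold]
      rw [Icc.coe_zero, sub_zero, one_mul, hmin, Path.extend_extends']
      exact hγ t
  · simp [fold]
  · rintro s t (rfl | rfl) <;> simp [fold]

theorem SimplyConnectedSpace.of_loops_homotopic_refl {X : Type*} [TopologicalSpace X]
    [PathConnectedSpace X] (x₀ : X) (h : ∀ γ : Path x₀ x₀, γ.Homotopic (Path.refl x₀)) :
    SimplyConnectedSpace X := by
  have : Subsingleton (FundamentalGroup X x₀) :=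
    ⟨Quotient.ind₂ fun γ γ' ↦ Quotient.sound ((h γ).trans (h γ').symm)⟩
  refine simply_connected_iff_loops_nullhomotopic.mpr ⟨‹_›, fun x γ ↦ ?_⟩
  have : Subsingleton (FundamentalGroup X x) :=
    (FundamentalGroup.fundamentalGroupMulEquivOfPathConnected x x₀).injective.subsingleton
  exact Quotient.exact (Subsingleton.elim (α := FundamentalGroup X x) ⟦γ⟧ ⟦Path.refl x⟧)

def HasPathLifting {E X : Type*} [TopologicalSpace E] [TopologicalSpace X] (p : E → X) : Prop :=
  ∀ (γ : C(I, X)) (e : E), γ 0 = p e → ∃ Γ : C(I, E), p ∘ Γ = γ ∧ Γ 0 = e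

theorem IsCoveringMap.hasPathLifting {E X : Type*} [TopologicalSpace E] [TopologicalSpace X]
    {p : E → X} (hp : IsCoveringMap p) : HasPathLifting p :=
  fun γ e hγ ↦ hp.exists_path_lifts γ e hγ

theorem HasPathLifting.prodMap {E F X Y : Type*} [TopologicalSpace E]
    [TopologicalSpace F] [TopologicalSpace X] [TopologicalSpace Y] {p : E → X} {q : F → Y}
    (hp : HasPathLifting p) (hq : HasPathLifting q) : HasPathLifting (Prod.map p q) := by
  intro γ e hγ
  obtain ⟨Γ₁, h₁, h₁0⟩ := hp (ContinuousMap.fst.comp γ) e.1 (by simp [hγ])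
  obtain ⟨Γ₂, h₂, h₂0⟩ := hq (ContinuousMap.snd.comp γ) e.2 (by simp [hγ])
  refine ⟨Γ₁.prodMk Γ₂, funext fun t ↦ ?_, by simp [h₁0, h₂0]⟩
  exact Prod.ext (congrFun h₁ t) (congrFun h₂ t)

theorem torusInv_eq_inv (p : T3) : torusInv p = p⁻¹ := rfl

theorem torusInv_involutive : Involutive torusInv := fun p ↦ by simp [torusInv_eq_inv]

theorem continuous_torusInv : Continuous torusInv := continuous_inv

noncomputable def expTorus : ℝ × ℝ × ℝ → T3 := Prod.map Circle.exp (Prod.map Circle.exp Circle.exp)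

theorem continuous_expTorus : Continuous expTorus := by unfold expTorus; fun_prop

theorem expTorus_zero : expTorus 0 = 1 := by simp [expTorus, Prod.ext_iff]

theorem expTorus_sub (v w : ℝ × ℝ × ℝ) : expTorus (v - w) = expTorus v / expTorus w := by
  simp [expTorus, Prod.ext_iff, Circle.exp_sub]

theorem surjective_expTorus : Surjective expTorus :=
  Circle.exp_surjective.prodMap (Circle.exp_surjective.prodMap Circle.exp_surjective)

theorem quot_mk_expTorus_sub {m : ℝ × ℝ × ℝ} (hm : expTorus m = 1) (v : ℝ × ℝ × ℝ) :
    (Quot.mk _ (expTorus (m - v)) : XT) = Quot.mk _ (expTorus v) := by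
  rw [expTorus_sub, hm, one_div, ← torusInv_eq_inv]
  exact Involutive.quot_mk_apply _

theorem hasPathLifting_expTorus : HasPathLifting expTorus :=
  Circle.isCoveringMap_exp.hasPathLifting.prodMap
    (Circle.isCoveringMap_exp.hasPathLifting.prodMap Circle.isCoveringMap_exp.hasPathLifting)

theorem XT_loop_homotopic_refl (γ : Path (Quot.mk _ 1 : XT) (Quot.mk _ 1)) :
    γ.Homotopic (Path.refl _) := by
  obtain ⟨Γ, hΓc, hΓ⟩ := torusInv_involutive.exists_continuous_lift continuous_torusInv
    γ.continuous_extend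
  have hΓ_one {t : ℝ} (ht : γ.extend t = Quot.mk _ 1) : Γ t = 1 :=
    torusInv_involutive.eq_of_quot_mk_eq_of_isFixedPt (by simp [IsFixedPt, torusInv_eq_inv])
      (by rw [← ht, ← hΓ]; rfl)
  obtain ⟨H, hH, hH0⟩ := hasPathLifting_expTorus ⟨Γ ∘ (↑), hΓc.comp continuous_subtype_val⟩ 0
    (by simp [hΓ_one γ.extend_zero, expTorus_zero])
  set m := H 1
  have hm : expTorus m = 1 := by simpa [m, hΓ_one γ.extend_one] using congrFun hH 1
  let P : C(ℝ × ℝ × ℝ, XT) := ⟨Quot.mk _ ∘ expTorus, continuous_quot_mk.comp continuous_expTorus⟩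
  have hP0 : Quot.mk _ 1 = P 0 := by simp [P, expTorus_zero]
  have hPm : Quot.mk _ 1 = P m := by simp [P, hm]
  have hγH : γ = ((⟨H, hH0, rfl⟩ : Path 0 m).map P.continuous).cast hP0 hPm := by
    ext t
    have hHt : expTorus (H t) = Γ t := congrFun hH t
    change γ t = Quot.mk _ (expTorus (H t))
    rw [hHt]
    exact ((congrFun hΓ t).trans (γ.extend_extends' t)).symm
  let ℓ := ((Path.segment 0 m).map P.continuous).cast hP0 hPm
  have hℓ (t : I) : ℓ (σ t) = ℓ t := by
    simp only [ℓ, P, Path.cast_coe, Path.map_coe, ContinuousMap.coe_mk, comp_apply,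
      Path.segment_apply, coe_symm_eq, AffineMap.lineMap_apply_module', sub_zero, add_zero,
      sub_smul, one_smul]
    exact quot_mk_expTorus_sub hm _
  rw [hγH]
  exact (((SimplyConnectedSpace.paths_homotopic _ _).map P).pathCast hP0 hPm).trans
    (ℓ.homotopic_refl_of_symm hℓ)

/-- The quotient `X_T = T³ / ι` is simply connected. -/
theorem XT_simplyConnected : SimplyConnectedSpace XT :=
  have : PathConnectedSpace XT :=
    (Quot.mk_surjective.comp surjective_expTorus).pathConnectedSpace
      (continuous_quot_mk.comp continuous_expTorus)
  .of_loops_homotopic_refl _ XT_loop_homotopic_refl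
end

section
/- The quotient of the 2-torus Circle × Circle by the equivalence relation identifying (z₁, z₂) with (z₁⁻¹, z₂⁻¹), equipped with the quotient topology, is homeomorphic to the unit sphere in EuclideanSpace ℝ (Fin 3). -/
/-!
The invariants `(Re z₁, Re z₂, Im z₁ · Im z₂)` of the involution separate its orbits and map the
torus onto the "pillowcase" `{w² = (1 - x²)(1 - y²), x² ≤ 1, y² ≤ 1}` in `ℝ³`. The pillowcase
avoids the origin and meets every open ray from the origin exactly once, so radial projection
identifies it with the unit sphere. The induced continuous bijection from the compact quotient
to the Hausdorff sphere is a homeomorphism.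
-/

open Set Function Metric

/-- The 2-torus, the product of two copies of the unit circle in `ℂ`. -/
abbrev T2 : Type := Circle × Circle

/-- The involution `(z₁, z₂) ↦ (z₁⁻¹, z₂⁻¹)` on the 2-torus, i.e. complex conjugation
in each factor. -/
noncomputable def torus2Inv : T2 → T2 := fun p => (p.1⁻¹, p.2⁻¹)

theorem Quot.nonempty_homeomorph_of_continuous_surjective {X Y : Type*} [TopologicalSpace X]
    [CompactSpace X] [TopologicalSpace Y] [T2Space Y] {r : X → X → Prop} {f : X → Y}
    (hf : Continuous f) (hsurj : Surjective f) (hr : ∀ x y, r x y → f x = f y)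
    (hfib : ∀ x y, f x = f y → Quot.mk r x = Quot.mk r y) : Nonempty (Quot r ≃ₜ Y) := by
  have hbij : Bijective (Quot.lift f hr) := by
    refine ⟨?_, (Quot.surjective_lift hr).2 hsurj⟩
    rintro ⟨x⟩ ⟨y⟩ h
    exact hfib x y h
  exact ⟨(continuous_quot_lift hr hf).homeoOfEquivCompactToT2 (f := Equiv.ofBijective _ hbij)⟩

section RadialProjection

variable {E : Type*} [NormedAddCommGroup E] [NormedSpace ℝ E] {S : Set E}

theorem injOn_inv_norm_smul_of_ray_unique (h0 : (0 : E) ∉ S)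
    (hray : ∀ v ∈ S, ∀ t : ℝ, 0 < t → t • v ∈ S → t = 1) :
    S.InjOn fun v => ‖v‖⁻¹ • v := by
  intro u hu v hv huv
  have hu0 : u ≠ 0 := ne_of_mem_of_not_mem hu h0
  have hv0 : v ≠ 0 := ne_of_mem_of_not_mem hv h0
  have hvu : (‖v‖ / ‖u‖) • u = v := by
    rw [div_eq_mul_inv, mul_smul, show ‖u‖⁻¹ • u = ‖v‖⁻¹ • v from huv, smul_smul,
      mul_inv_cancel₀ (norm_ne_zero_iff.2 hv0), one_smul]
  have ht : ‖v‖ / ‖u‖ = 1 := hray u hu _ (by positivity) (by rwa [hvu])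
  rw [← hvu, ht, one_smul]

theorem surjOn_inv_norm_smul_of_ray_exists
    (hray : ∀ v : E, ‖v‖ = 1 → ∃ t : ℝ, 0 < t ∧ t • v ∈ S) :
    SurjOn (fun v => ‖v‖⁻¹ • v) S (sphere 0 1) := by
  intro v hv
  rw [mem_sphere_zero_iff_norm] at hv
  obtain ⟨t, ht, htv⟩ := hray v hv
  refine ⟨t • v, htv, ?_⟩
  simp [norm_smul, hv, abs_of_pos ht, smul_smul, ht.ne']

end RadialProjection

namespace Circle

theorem re_sq_add_im_sq (z : Circle) : (z : ℂ).re ^ 2 + (z : ℂ).im ^ 2 = 1 := by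
  simpa [Complex.normSq_apply, sq] using normSq_coe z

theorem inv_eq_self_of_im_eq_zero {z : Circle} (h : (z : ℂ).im = 0) : z⁻¹ = z :=
  ext (by rw [coe_inv_eq_conj, Complex.conj_eq_iff_im.2 h])

theorem eq_or_eq_inv_of_re_eq {z w : Circle} (h : (z : ℂ).re = (w : ℂ).re) :
    w = z ∨ w = z⁻¹ := by
  have him : (w : ℂ).im ^ 2 = (z : ℂ).im ^ 2 := by
    linear_combination re_sq_add_im_sq w - re_sq_add_im_sq z + ((z : ℂ).re + (w : ℂ).re) * h
  rcases sq_eq_sq_iff_eq_or_eq_neg.1 him with him | him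
  · exact Or.inl (ext (Complex.ext h.symm him))
  · exact Or.inr (ext (by rw [coe_inv_eq_conj]; exact Complex.ext h.symm (by simp [him])))

theorem exists_re_eq_im_eq_sqrt {x : ℝ} (hx : x ^ 2 ≤ 1) :
    ∃ z : Circle, (z : ℂ).re = x ∧ (z : ℂ).im = √(1 - x ^ 2) := by
  obtain ⟨hx₁, hx₂⟩ := abs_le.1 ((sq_le_one_iff_abs_le_one x).1 hx)
  refine ⟨exp (Real.arccos x), ?_, ?_⟩
  · rw [coe_exp, Complex.exp_ofReal_mul_I_re, Real.cos_arccos hx₁ hx₂]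
  · rw [coe_exp, Complex.exp_ofReal_mul_I_im, Real.sin_arccos]

end Circle

theorem exists_pos_root_of_add_le_one {a b : ℝ} (ha : 0 ≤ a) (hb : 0 ≤ b) (hab : a + b ≤ 1) :
    ∃ s : ℝ, 0 < s ∧ a * b * s ^ 2 - s + 1 = 0 ∧ s * a ≤ 1 ∧ s * b ≤ 1 := by
  set R := √(1 - 4 * a * b)
  have hR0 : 0 ≤ R := Real.sqrt_nonneg _
  have hR2 : R ^ 2 = 1 - 4 * a * b := Real.sq_sqrt (by nlinarith [sq_nonneg (a - b)])
  -- `(2c - 1)² ≤ R²` reduces to `c (a + b - 1) ≤ 0` for `c ∈ {a, b}`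
  have hRa : 2 * a - 1 ≤ R := (le_abs_self _).trans (Real.abs_le_sqrt (by nlinarith))
  have hRb : 2 * b - 1 ≤ R := (le_abs_self _).trans (Real.abs_le_sqrt (by nlinarith))
  -- the smaller root `(1 - R) / (2ab)`, written so that it also makes sense when `ab = 0`
  refine ⟨2 / (1 + R), by positivity, ?_, ?_, ?_⟩
  · field_simp
    linear_combination hR2
  · rw [div_mul_eq_mul_div, div_le_one (by positivity)]
    linarith
  · rw [div_mul_eq_mul_div, div_le_one (by positivity)]
    linarith

noncomputable def pillowcaseMap (p : T2) : EuclideanSpace ℝ (Fin 3) :=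
  !₂[(p.1 : ℂ).re, (p.2 : ℂ).re, (p.1 : ℂ).im * (p.2 : ℂ).im]

def pillowcase : Set (EuclideanSpace ℝ (Fin 3)) :=
  {v | v 0 ^ 2 ≤ 1 ∧ v 1 ^ 2 ≤ 1 ∧ v 2 ^ 2 = (1 - v 0 ^ 2) * (1 - v 1 ^ 2)}

theorem continuous_pillowcaseMap : Continuous pillowcaseMap := by
  unfold pillowcaseMap
  fun_prop

theorem pillowcaseMap_torus2Inv (p : T2) : pillowcaseMap (torus2Inv p) = pillowcaseMap p := by
  simp [pillowcaseMap, torus2Inv]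

theorem eq_or_eq_torus2Inv_of_pillowcaseMap_eq {p q : T2}
    (h : pillowcaseMap p = pillowcaseMap q) : q = p ∨ q = torus2Inv p := by
  obtain ⟨p₁, p₂⟩ := p
  obtain ⟨q₁, q₂⟩ := q
  have h₀ : (p₁ : ℂ).re = (q₁ : ℂ).re := congrArg (· 0) h
  have h₁ : (p₂ : ℂ).re = (q₂ : ℂ).re := congrArg (· 1) h
  have h₂ : (p₁ : ℂ).im * (p₂ : ℂ).im = (q₁ : ℂ).im * (q₂ : ℂ).im := congrArg (· 2) h
  rcases Circle.eq_or_eq_inv_of_re_eq h₀ with rfl | rfl <;>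
    rcases Circle.eq_or_eq_inv_of_re_eq h₁ with rfl | rfl
  · exact Or.inl rfl
  · rcases mul_eq_zero.1 (by simp at h₂; linarith : (q₁ : ℂ).im * (p₂ : ℂ).im = 0) with h | h
    · exact Or.inr (by rw [torus2Inv, Circle.inv_eq_self_of_im_eq_zero h])
    · exact Or.inl (by rw [Circle.inv_eq_self_of_im_eq_zero h])
  · rcases mul_eq_zero.1 (by simp at h₂; linarith : (p₁ : ℂ).im * (q₂ : ℂ).im = 0) with h | h
    · exact Or.inl (by rw [Circle.inv_eq_self_of_im_eq_zero h])
    · exact Or.inr (by rw [torus2Inv, Circle.inv_eq_self_of_im_eq_zero h])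
  · exact Or.inr rfl

theorem range_pillowcaseMap : range pillowcaseMap = pillowcase := by
  ext v
  constructor
  · rintro ⟨⟨z, w⟩, rfl⟩
    have hz := Circle.re_sq_add_im_sq z
    have hw := Circle.re_sq_add_im_sq w
    exact ⟨(by nlinarith : (z : ℂ).re ^ 2 ≤ 1), (by nlinarith : (w : ℂ).re ^ 2 ≤ 1),
      (by linear_combination (w : ℂ).im ^ 2 * hz + (1 - (z : ℂ).re ^ 2) * hw :
        ((z : ℂ).im * (w : ℂ).im) ^ 2 = (1 - (z : ℂ).re ^ 2) * (1 - (w : ℂ).re ^ 2))⟩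
  · rintro ⟨hx, hy, hw⟩
    obtain ⟨z, hz_re, hz_im⟩ := Circle.exists_re_eq_im_eq_sqrt hx
    obtain ⟨w, hw_re, hw_im⟩ := Circle.exists_re_eq_im_eq_sqrt hy
    have habs : |v 2| = √(1 - v 0 ^ 2) * √(1 - v 1 ^ 2) := by
      rw [← Real.sqrt_mul (by linarith), ← hw, Real.sqrt_sq_eq_abs]
    rcases le_or_gt 0 (v 2) with hv | hv
    · refine ⟨(z, w), ?_⟩
      ext i
      fin_cases i <;> simp [pillowcaseMap, hz_re, hz_im, hw_re, hw_im, ← habs, abs_of_nonneg hv]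
    · refine ⟨(z, w⁻¹), ?_⟩
      ext i
      fin_cases i <;> simp [pillowcaseMap, hz_re, hz_im, hw_re, hw_im, ← habs, abs_of_neg hv]

theorem zero_notMem_pillowcase : (0 : EuclideanSpace ℝ (Fin 3)) ∉ pillowcase := by
  simp [pillowcase]

theorem eq_one_of_smul_mem_pillowcase {v : EuclideanSpace ℝ (Fin 3)} (hv : v ∈ pillowcase)
    {t : ℝ} (ht : 0 < t) (htv : t • v ∈ pillowcase) : t = 1 := by
  obtain ⟨hx, hy, hw⟩ := hv
  obtain ⟨hx', hy', hw'⟩ := htv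
  simp only [PiLp.smul_apply, smul_eq_mul, mul_pow] at hx' hy' hw'
  have key : (t ^ 2 - 1) * (1 - t ^ 2 * v 0 ^ 2 * v 1 ^ 2) = 0 := by
    linear_combination hw' - t ^ 2 * hw
  have ht2 : t ^ 2 = 1 := by
    rcases mul_eq_zero.1 key with h | h
    · linarith
    · nlinarith [mul_le_mul_of_nonneg_left hy (sq_nonneg (v 0)),
        mul_le_mul_of_nonneg_left hx' (sq_nonneg (v 1))]
  nlinarith

theorem exists_pos_smul_mem_pillowcase {v : EuclideanSpace ℝ (Fin 3)} (hv : ‖v‖ = 1) :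
    ∃ t : ℝ, 0 < t ∧ t • v ∈ pillowcase := by
  have habc : v 0 ^ 2 + v 1 ^ 2 + v 2 ^ 2 = 1 := by
    rw [← Fin.sum_univ_three (fun i => v i ^ 2), ← EuclideanSpace.real_norm_sq_eq, hv, one_pow]
  obtain ⟨s, hs, hroot, ha, hb⟩ := exists_pos_root_of_add_le_one (sq_nonneg (v 0))
    (sq_nonneg (v 1)) (by nlinarith [sq_nonneg (v 2)])
  refine ⟨√s, Real.sqrt_pos.2 hs, ?_⟩
  simp only [pillowcase, mem_ofPred_eq, PiLp.smul_apply, smul_eq_mul, mul_pow,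
    Real.sq_sqrt hs.le]
  refine ⟨by linarith, by linarith, by linear_combination s * habc - hroot⟩

theorem pillowcaseMap_ne_zero (p : T2) : pillowcaseMap p ≠ 0 := fun h =>
  zero_notMem_pillowcase (h ▸ range_pillowcaseMap ▸ mem_range_self p)

noncomputable def torusToSphere (p : T2) : sphere (0 : EuclideanSpace ℝ (Fin 3)) 1 :=
  ⟨‖pillowcaseMap p‖⁻¹ • pillowcaseMap p,
    mem_sphere_zero_iff_norm.2 (norm_smul_inv_norm (pillowcaseMap_ne_zero p))⟩

theorem continuous_torusToSphere : Continuous torusToSphere :=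
  ((continuous_pillowcaseMap.norm.inv₀ fun p => norm_ne_zero_iff.2 (pillowcaseMap_ne_zero p)).smul
    continuous_pillowcaseMap).subtype_mk _

theorem torusToSphere_torus2Inv (p : T2) : torusToSphere (torus2Inv p) = torusToSphere p := by
  simp [torusToSphere, pillowcaseMap_torus2Inv]

theorem surjective_torusToSphere : Surjective torusToSphere := by
  rintro ⟨v, hv⟩
  obtain ⟨u, hu, rfl⟩ :=
    surjOn_inv_norm_smul_of_ray_exists (fun _ => exists_pos_smul_mem_pillowcase) hv
  rw [← range_pillowcaseMap] at hu
  obtain ⟨p, rfl⟩ := hu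
  exact ⟨p, rfl⟩

theorem pillowcaseMap_eq_of_torusToSphere_eq {p q : T2} (h : torusToSphere p = torusToSphere q) :
    pillowcaseMap p = pillowcaseMap q := by
  have hmem (p : T2) : pillowcaseMap p ∈ pillowcase := range_pillowcaseMap ▸ mem_range_self p
  exact injOn_inv_norm_smul_of_ray_unique zero_notMem_pillowcase
    (fun _ hv _ => eq_one_of_smul_mem_pillowcase hv) (hmem p) (hmem q) (congrArg Subtype.val h)

/-- The quotient of the 2-torus by the involution `(z₁, z₂) ↦ (z₁⁻¹, z₂⁻¹)`, with the
quotient topology, is homeomorphic to the unit 2-sphere. -/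
theorem torus2_quotient_homeomorphic_sphere :
    Nonempty (Quot (fun p q : T2 => torus2Inv p = q) ≃ₜ
      (Metric.sphere (0 : EuclideanSpace ℝ (Fin 3)) 1)) := by
  refine Quot.nonempty_homeomorph_of_continuous_surjective continuous_torusToSphere
    surjective_torusToSphere (fun p _ hpq => hpq ▸ (torusToSphere_torus2Inv p).symm) ?_
  intro p q h
  rcases eq_or_eq_torus2Inv_of_pillowcaseMap_eq (pillowcaseMap_eq_of_torusToSphere_eq h)
    with rfl | rfl
  · rfl
  · exact Quot.sound rfl
end

section
/- Let Z be a nonempty compact connected topological 3-manifold (a topological space that is a charted space modeled on EuclideanSpace ℝ (Fin 3)) which is not simply connected. Then the cone C(Z) is not homeomorphic to the closed unit ball in EuclideanSpace ℝ (Fin 4). -/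
/-!
Removing the vertex from `C(Z)` leaves `Z × (0,1]`, which retracts onto `Z × {1}`. So if
`C(Z) ≅ B⁴`, then `Z` is a retract of `B⁴` minus a point, which is simply connected; hence so
is `Z`.

A convex body `C` of dimension `≥ 3` minus a point `p` is simply connected: a loop in `C \ {p}`
is homotopic to a polygon, and for `q ∈ interior C` off the planes through `p` and an edge of the
polygon (a null set), no segment from `q` to the polygon meets `p`. The polygon then lies in the
set of points of `C` that `p` does not hide from `q`, which is star-shaped about `q`.
-/

/-- The cone on a topological space `Z`: the quotient of `Z × [0,1]` obtained by
collapsing `Z × {0}` to a single point, with the quotient topology. -/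
abbrev TopCone (Z : Type) [TopologicalSpace Z] : Type :=
  Quot (fun a b : Z × unitInterval => a.2 = 0 ∧ b.2 = 0)

open Set Module MeasureTheory Topology

theorem SimplyConnectedSpace.of_retract {X Y : Type*} [TopologicalSpace X] [TopologicalSpace Y]
    [Nonempty X] [SimplyConnectedSpace Y] (i : C(X, Y)) (r : C(Y, X))
    (hri : Function.LeftInverse r i) : SimplyConnectedSpace X := by
  rw [simply_connected_iff_paths_homotopic']
  refine ⟨hri.surjective.pathConnectedSpace r.continuous, fun {x y} a b => ?_⟩
  have hr : ∀ γ : Path x y, r.comp (γ.map i.continuous).toContinuousMap = γ.toContinuousMap :=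
    fun γ => ContinuousMap.ext fun t => hri (γ t)
  have h : ContinuousMap.HomotopicRel (a.map i.continuous).toContinuousMap
      (b.map i.continuous).toContinuousMap {0, 1} :=
    SimplyConnectedSpace.paths_homotopic _ _
  have := h.comp_continuousMap r
  rwa [hr, hr] at this

theorem Path.homotopic_of_forall_mem_isSimplyConnected {X : Type*} [TopologicalSpace X]
    {s t : Set X} (hts : t ⊆ s) (ht : IsSimplyConnected t) {x y : s} {γ₁ γ₂ : Path x y}
    (h₁ : ∀ u, (γ₁ u : X) ∈ t) (h₂ : ∀ u, (γ₂ u : X) ∈ t) : γ₁.Homotopic γ₂ := by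
  have := ht.simplyConnectedSpace
  have hx : (x : X) ∈ t := γ₁.source ▸ h₁ 0
  have hy : (y : X) ∈ t := γ₁.target ▸ h₁ 1
  let lift (γ : Path x y) (hγ : ∀ u, (γ u : X) ∈ t) : Path (⟨x, hx⟩ : t) ⟨y, hy⟩ :=
    { toFun := fun u => ⟨γ u, hγ u⟩
      source' := by simp
      target' := by simp }
  exact (SimplyConnectedSpace.paths_homotopic (lift γ₁ h₁) (lift γ₂ h₂)).map
    (ContinuousMap.inclusion hts)

theorem Path.homotopic_of_segment_subset {E : Type*} [AddCommGroup E] [Module ℝ E]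
    [TopologicalSpace E] [IsTopologicalAddGroup E] [ContinuousSMul ℝ E] {s : Set E} {x y : s}
    {γ₁ γ₂ : Path x y} (h : ∀ t, segment ℝ (γ₁ t : E) (γ₂ t) ⊆ s) : γ₁.Homotopic γ₂ :=
  ⟨{ toFun := fun q => ⟨AffineMap.lineMap (γ₁ q.2 : E) (γ₂ q.2) (q.1 : ℝ),
        h q.2 (lineMap_mem_segment ℝ _ _ q.1.2)⟩
     continuous_toFun := by
       refine Continuous.subtype_mk ?_ _
       simp only [AffineMap.lineMap_apply_module]
       fun_prop
     map_zero_left := fun t => by simp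
     map_one_left := fun t => by simp
     prop' := by rintro u t (rfl | rfl) <;> simp }⟩

section

variable {E : Type*} [NormedAddCommGroup E] [NormedSpace ℝ E]

theorem affineSpan_triple_ne_top [FiniteDimensional ℝ E] (hE : 3 ≤ finrank ℝ E) (a b c : E) :
    affineSpan ℝ {a, b, c} ≠ ⊤ := by
  intro htop
  have h2 : finrank ℝ (vectorSpan ℝ (range ![a, b, c])) ≤ 2 :=
    finrank_vectorSpan_range_le ℝ _ (by simp)
  have h3 : range ![a, b, c] = {a, b, c} := by
    ext; simp; tauto
  rw [h3, ← direction_affineSpan, htop, AffineSubspace.direction_top, finrank_top] at h2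
  omega

theorem IsOpen.exists_forall_notMem_affineSpan [FiniteDimensional ℝ E] (hE : 3 ≤ finrank ℝ E)
    {U : Set E} (hU : IsOpen U) (hne : U.Nonempty) (p : E) (v w : ℕ → E) :
    ∃ q ∈ U, ∀ k, q ∉ affineSpan ℝ {p, v k, w k} := by
  borelize E
  have hnull : Measure.addHaar (⋃ k, (affineSpan ℝ {p, v k, w k} : Set E)) = 0 :=
    measure_iUnion_null fun k =>
      Measure.addHaar_affineSubspace _ _ (affineSpan_triple_ne_top hE _ _ _)
  have hsub : ¬ U ⊆ ⋃ k, (affineSpan ℝ {p, v k, w k} : Set E) := fun h =>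
    (hU.measure_pos Measure.addHaar hne).ne' (measure_mono_null h hnull)
  simpa [not_subset] using hsub

theorem mem_affineSpan_of_mem_segment {p q v w z : E} (hz : z ∈ segment ℝ v w) (hzp : z ≠ p)
    (hp : p ∈ segment ℝ z q) : q ∈ affineSpan ℝ {p, v, w} := by
  have hzS : z ∈ affineSpan ℝ {p, v, w} :=
    affineSpan_mono ℝ (by intro x hx; simp at hx ⊢; tauto)
      (mem_segment_iff_wbtw.1 hz).mem_affineSpan
  have hpS : p ∈ affineSpan ℝ {p, v, w} := mem_affineSpan ℝ (by simp)
  exact affineSpan_pair_le_of_mem_of_mem hzS hpS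
    ((mem_segment_iff_wbtw.1 hp).right_mem_affineSpan_of_left_ne hzp)

theorem starConvex_setOf_notMem_segment (p q : E) :
    StarConvex ℝ q {z | p ∉ segment ℝ z q} := by
  intro z hz a b ha hb hab hp
  refine hz ((convex_segment z q).segment_subset ?_ (right_mem_segment ℝ z q) hp)
  exact ⟨b, a, hb, ha, by linarith, by rw [add_comm]⟩

noncomputable def polygonalCurve (f : ℕ → E) (n : ℕ) (s : ℝ) : E :=
  f 0 + ∑ k ∈ Finset.range n, (projIcc (0 : ℝ) 1 zero_le_one (s - k) : ℝ) • (f (k + 1) - f k)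

theorem continuous_polygonalCurve (f : ℕ → E) (n : ℕ) : Continuous (polygonalCurve f n) := by
  unfold polygonalCurve
  fun_prop

theorem polygonalCurve_zero (f : ℕ → E) (n : ℕ) : polygonalCurve f n 0 = f 0 := by
  have : ∀ k : ℕ, projIcc (0 : ℝ) 1 zero_le_one (-k) = 0 := fun k =>
    projIcc_of_le_left _ (by simp)
  simp [polygonalCurve, this]

theorem polygonalCurve_natCast (f : ℕ → E) (n : ℕ) : polygonalCurve f n n = f n := by
  have : ∀ k ∈ Finset.range n, projIcc (0 : ℝ) 1 zero_le_one (n - k) = 1 := fun k hk =>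
    projIcc_of_right_le _ <| by
      have : (k : ℝ) + 1 ≤ n := by exact_mod_cast Finset.mem_range.1 hk
      linarith
  rw [polygonalCurve, Finset.sum_congr rfl fun k hk => by rw [this k hk, Icc.coe_one, one_smul],
    Finset.sum_range_sub, add_sub_cancel]

theorem polygonalCurve_eq_lineMap (f : ℕ → E) {n k : ℕ} (hk : k < n) {s : ℝ}
    (hs : s ∈ Icc (k : ℝ) (k + 1)) :
    polygonalCurve f n s = AffineMap.lineMap (f k) (f (k + 1)) (s - k) := by
  obtain ⟨m, rfl⟩ := Nat.exists_eq_add_of_le hk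
  have hbefore : ∑ j ∈ Finset.range k,
      (projIcc (0 : ℝ) 1 zero_le_one (s - j) : ℝ) • (f (j + 1) - f j) = f k - f 0 := by
    rw [← Finset.sum_range_sub]
    refine Finset.sum_congr rfl fun j hj => ?_
    have : (j : ℝ) + 1 ≤ k := by exact_mod_cast Finset.mem_range.1 hj
    rw [projIcc_of_right_le _ (by linarith [hs.1])]
    exact one_smul ℝ _
  have hat : (projIcc (0 : ℝ) 1 zero_le_one (s - k) : ℝ) = s - k :=
    congrArg Subtype.val (projIcc_of_mem _ ⟨by linarith [hs.1], by linarith [hs.2]⟩)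
  have hafter : ∑ j ∈ Finset.range m, (projIcc (0 : ℝ) 1 zero_le_one (s - ↑(k + 1 + j)) : ℝ) •
      (f (k + 1 + j + 1) - f (k + 1 + j)) = 0 := by
    refine Finset.sum_eq_zero fun j _ => ?_
    rw [projIcc_of_le_left _ (by push_cast; linarith [hs.2, (j.cast_nonneg : (0 : ℝ) ≤ j)])]
    exact zero_smul ℝ _
  rw [polygonalCurve, Finset.sum_range_add, Finset.sum_range_succ, hbefore, hafter, hat,
    AffineMap.lineMap_apply_module]
  module

theorem polygonalCurve_mem_segment (f : ℕ → E) {n k : ℕ} (hk : k < n) {s : ℝ}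
    (hs : s ∈ Icc (k : ℝ) (k + 1)) : polygonalCurve f n s ∈ segment ℝ (f k) (f (k + 1)) := by
  rw [polygonalCurve_eq_lineMap f hk hs]
  exact lineMap_mem_segment ℝ _ _ ⟨by linarith [hs.1], by linarith [hs.2]⟩

theorem exists_lt_mem_Icc_of_mem_Icc {n : ℕ} (hn : 0 < n) {s : ℝ} (hs : s ∈ Icc (0 : ℝ) n) :
    ∃ k < n, s ∈ Icc (k : ℝ) (k + 1) := by
  rcases hs.2.lt_or_eq with hlt | rfl
  · exact ⟨⌊s⌋₊, (Nat.floor_lt hs.1).2 hlt, Nat.floor_le hs.1, (Nat.lt_floor_add_one s).le⟩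
  · exact ⟨n - 1, by omega, by rw [Nat.cast_sub hn]; simp, by rw [Nat.cast_sub hn]; simp⟩

theorem Path.exists_polygonal_approx {x y : E} (γ : Path x y) {ε : ℝ} (hε : 0 < ε) :
    ∃ (τ : ℕ → unitInterval) (P : Path x y),
      ∀ t, dist (P t) (γ t) < ε ∧ ∃ k, P t ∈ segment ℝ (γ (τ k)) (γ (τ (k + 1))) := by
  obtain ⟨η, hη, hγη⟩ := Metric.uniformContinuous_iff.1
    (CompactSpace.uniformContinuous_of_continuous γ.continuous) (ε / 2) (half_pos hε)
  obtain ⟨N, hNpos, hNη⟩ : ∃ N : ℕ, 0 < N ∧ 1 / (N : ℝ) < η :=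
    let ⟨n, hn⟩ := exists_nat_one_div_lt hη
    ⟨n + 1, n.succ_pos, by exact_mod_cast hn⟩
  have hN : (0 : ℝ) < N := by exact_mod_cast hNpos
  let τ (k : ℕ) : unitInterval := projIcc 0 1 zero_le_one (k / N)
  have hτ {k : ℕ} (hk : k ≤ N) : (τ k : ℝ) = k / N :=
    congrArg Subtype.val <| projIcc_of_mem _
      ⟨by positivity, div_le_one_of_le₀ (by exact_mod_cast hk) hN.le⟩
  let f (k : ℕ) : E := γ (τ k)
  let P : Path x y :=
    { toFun := fun t => polygonalCurve f N (N * t)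
      continuous_toFun := (continuous_polygonalCurve f N).comp (by fun_prop)
      source' := by simp [polygonalCurve_zero, f, τ]
      target' := by simp [polygonalCurve_natCast, f, τ, hN.ne'] }
  refine ⟨τ, P, fun t => ?_⟩
  obtain ⟨k, hk, hkt⟩ := exists_lt_mem_Icc_of_mem_Icc hNpos (s := N * t)
    ⟨mul_nonneg hN.le t.2.1, mul_le_of_le_one_right hN.le t.2.2⟩
  have hseg : P t ∈ segment ℝ (f k) (f (k + 1)) := polygonalCurve_mem_segment f hk hkt
  have hstep : dist (f k) (f (k + 1)) < ε / 2 := by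
    refine hγη ?_
    rwa [Subtype.dist_eq, hτ hk.le, hτ hk, Real.dist_eq, Nat.cast_succ, add_div,
      sub_add_cancel_left, abs_neg, abs_of_pos (by positivity)]
  have hnear : dist (f k) (γ t) < ε / 2 := by
    refine hγη (lt_of_le_of_lt ?_ hNη)
    rw [Subtype.dist_eq, hτ hk.le, Real.dist_eq, abs_sub_comm,
      show (t : ℝ) - k / N = (N * t - k) / N by field_simp, abs_div,
      abs_of_nonneg (by linarith [hkt.1]), abs_of_pos hN]
    exact div_le_div_of_nonneg_right (by linarith [hkt.2]) hN.le
  refine ⟨?_, k, hseg⟩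
  calc dist (P t) (γ t) ≤ dist (P t) (f k) + dist (f k) (γ t) := dist_triangle _ _ _
    _ < ε := by linarith [Metric.mem_closedBall.1 (segment_subset_closedBall_left _ _ hseg)]

theorem Convex.exists_isSimplyConnected_subset_diff_singleton [FiniteDimensional ℝ E]
    (hE : 3 ≤ finrank ℝ E) {C : Set E} (hC : Convex ℝ C) (hCi : (interior C).Nonempty) (p : E)
    {v w : ℕ → E} (hv : ∀ k, v k ∈ C) (hw : ∀ k, w k ∈ C) :
    ∃ T ⊆ C \ {p}, IsSimplyConnected T ∧ ∀ k, segment ℝ (v k) (w k) \ {p} ⊆ T := by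
  obtain ⟨q, hqC, hq⟩ := isOpen_interior.exists_forall_notMem_affineSpan hE hCi p v w
  let T := C ∩ {z | p ∉ segment ℝ z q}
  have hTS : T ⊆ C \ {p} := fun z hz => ⟨hz.1, fun hzp => hz.2 (hzp ▸ left_mem_segment ℝ _ _)⟩
  have hpq : p ≠ q := fun h => hq 0 (h ▸ mem_affineSpan ℝ (by simp))
  have hqT : q ∈ T := ⟨interior_subset hqC, by simpa [segment_same] using hpq⟩
  have := ((hC.starConvex (interior_subset hqC)).inter
    (starConvex_setOf_notMem_segment p q)).contractibleSpace ⟨q, hqT⟩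
  exact ⟨T, hTS, SimplyConnectedSpace.ofContractible _, fun k z hz =>
    ⟨hC.segment_subset (hv k) (hw k) hz.1,
      fun hp => hq k (mem_affineSpan_of_mem_segment hz.1 hz.2 hp)⟩⟩

theorem Convex.isSimplyConnected_diff_singleton [FiniteDimensional ℝ E] (hE : 3 ≤ finrank ℝ E)
    {C : Set E} (hC : Convex ℝ C) (hCi : (interior C).Nonempty) (p : E) :
    IsSimplyConnected (C \ {p}) := by
  rw [IsSimplyConnected, simply_connected_iff_loops_nullhomotopic,
    ← isPathConnected_iff_pathConnectedSpace, isPathConnected_iff]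
  refine ⟨⟨?_, fun x hx y hy => ?_⟩, fun x γ => ?_⟩
  · obtain ⟨c, hc⟩ := hCi
    obtain ⟨T, hTS, hT, -⟩ := hC.exists_isSimplyConnected_subset_diff_singleton hE ⟨c, hc⟩ p
      (v := fun _ => c) (w := fun _ => c) (fun _ => interior_subset hc)
      (fun _ => interior_subset hc)
    exact hT.nonempty.mono hTS
  · obtain ⟨T, hTS, hT, hsegT⟩ := hC.exists_isSimplyConnected_subset_diff_singleton hE hCi p
      (v := fun _ => x) (w := fun _ => y) (fun _ => hx.1) (fun _ => hy.1)
    exact ((isPathConnected_iff.1 hT.isPathConnected).2 x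
      (hsegT 0 ⟨left_mem_segment ℝ x y, hx.2⟩) y (hsegT 0 ⟨right_mem_segment ℝ x y, hy.2⟩)).mono hTS
  · obtain ⟨t₀, -, ht₀⟩ := isCompact_univ.exists_isMinOn univ_nonempty
      (f := fun t => dist (γ t : E) p) (by fun_prop)
    have hmin : ∀ t, dist (γ t₀ : E) p ≤ dist (γ t : E) p := fun t => ht₀ (mem_univ t)
    have hδ : 0 < dist (γ t₀ : E) p := dist_pos.2 (γ t₀).2.2
    obtain ⟨τ, P, hP⟩ := (γ.map continuous_subtype_val).exists_polygonal_approx hδ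
    have hball : ∀ t, Metric.ball (γ t : E) (dist (γ t₀ : E) p) ∩ C ⊆ C \ {p} :=
      fun t z hz => ⟨hz.2, fun hzp => by
        have h := Metric.mem_ball'.1 hz.1
        rw [mem_singleton_iff.1 hzp] at h
        exact not_lt.2 (hmin t) h⟩
    obtain ⟨T, hTS, hT, hsegT⟩ := hC.exists_isSimplyConnected_subset_diff_singleton hE hCi p
      (v := fun k => γ (τ k)) (w := fun k => γ (τ (k + 1))) (fun k => (γ _).2.1)
      (fun k => (γ _).2.1)
    have hPC : ∀ t, P t ∈ C := fun t =>
      let ⟨k, hk⟩ := (hP t).2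
      hC.segment_subset (γ _).2.1 (γ _).2.1 hk
    have hsegS : ∀ t, segment ℝ (γ t : E) (P t) ⊆ C \ {p} := fun t =>
      (subset_inter ((convex_ball _ _).segment_subset (Metric.mem_ball_self hδ)
        (Metric.mem_ball.2 (hP t).1)) (hC.segment_subset (γ t).2.1 (hPC t))).trans (hball t)
    have hPS : ∀ t, P t ∈ C \ {p} := fun t => hsegS t (right_mem_segment ℝ _ _)
    let P' : Path x x :=
      { toFun := fun t => ⟨P t, hPS t⟩
        source' := Subtype.ext P.source
        target' := Subtype.ext P.target }
    have hPT : ∀ t, (P' t : E) ∈ T := fun t =>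
      let ⟨k, hk⟩ := (hP t).2
      hsegT k ⟨hk, (hPS t).2⟩
    exact (Path.homotopic_of_segment_subset (γ₂ := P') hsegS).trans
      (Path.homotopic_of_forall_mem_isSimplyConnected hTS hT hPT fun _ => by simpa using hPT 0)

end

namespace TopCone

variable {Z : Type} [TopologicalSpace Z]

noncomputable def height : TopCone Z → unitInterval :=
  Quot.lift Prod.snd fun _ _ h => h.1.trans h.2.symm

theorem continuous_height : Continuous (height (Z := Z)) :=
  continuous_quot_lift _ continuous_snd

variable [Nonempty Z]

noncomputable def vertex : TopCone Z := Quot.mk _ (Classical.arbitrary Z, 0)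

theorem eq_vertex_iff {c : TopCone Z} : c = vertex ↔ height c = 0 := by
  induction c using Quot.ind with
  | mk a => exact ⟨fun h => h ▸ rfl, fun h => Quot.sound ⟨h, rfl⟩⟩

noncomputable def proj : TopCone Z → Z :=
  Quot.lift (fun a => if a.2 = 0 then Classical.arbitrary Z else a.1) fun a b h => by
    simp [h.1, h.2]

theorem proj_mk {z : Z} {t : unitInterval} (ht : t ≠ 0) : proj (Quot.mk _ (z, t)) = z :=
  if_neg ht

theorem isOpen_compl_vertex : IsOpen ({vertex}ᶜ : Set (TopCone Z)) := by
  have : ({vertex}ᶜ : Set (TopCone Z)) = height ⁻¹' {0}ᶜ := by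
    ext c; simp [eq_vertex_iff]
  rw [this]
  exact isOpen_compl_singleton.preimage continuous_height

theorem continuousOn_proj : ContinuousOn (proj (Z := Z)) {vertex}ᶜ := by
  rw [isQuotientMap_quot_mk.continuousOn_isOpen_iff isOpen_compl_vertex]
  refine continuous_fst.continuousOn.congr fun a ha => ?_
  exact proj_mk fun h0 => ha (eq_vertex_iff.2 h0)

theorem simplyConnectedSpace_of_isSimplyConnected_compl_vertex
    (h : IsSimplyConnected ({vertex}ᶜ : Set (TopCone Z))) : SimplyConnectedSpace Z := by
  have hbase : ∀ z : Z, Quot.mk _ (z, 1) ∈ ({vertex}ᶜ : Set (TopCone Z)) := fun z hz =>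
    one_ne_zero (congrArg Subtype.val (eq_vertex_iff.1 hz))
  have := h.simplyConnectedSpace
  refine .of_retract ⟨fun z => ⟨Quot.mk _ (z, 1), hbase z⟩, by fun_prop⟩
    ⟨_, continuousOn_proj.domRestrict⟩ fun _ => ?_
  exact proj_mk one_ne_zero

end TopCone

theorem cone_not_homeomorphic_ball_general (Z : Type) [TopologicalSpace Z] [Nonempty Z]
    (h : ¬ SimplyConnectedSpace Z) :
    ¬ Nonempty (TopCone Z ≃ₜ (Metric.closedBall (0 : EuclideanSpace ℝ (Fin 4)) 1)) := by
  rintro ⟨e⟩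
  refine h (TopCone.simplyConnectedSpace_of_isSimplyConnected_compl_vertex ?_)
  have hball := (convex_closedBall (0 : EuclideanSpace ℝ (Fin 4)) 1)
    |>.isSimplyConnected_diff_singleton (by simp) (by simp [interior_closedBall]) (e TopCone.vertex)
  rwa [← image_singleton, ← image_val_compl, IsEmbedding.subtypeVal.isSimplyConnected_image,
    ← image_singleton, ← image_compl_eq e.bijective, e.isSimplyConnected_image] at hball

/-- If `Z` is a nonempty compact connected topological 3-manifold that is not simply
connected, then the cone on `Z` is not homeomorphic to the closed unit ball in
`EuclideanSpace ℝ (Fin 4)`. -/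
theorem cone_not_homeomorphic_ball (Z : Type) [TopologicalSpace Z]
    [ChartedSpace (EuclideanSpace ℝ (Fin 3)) Z] [Nonempty Z] [CompactSpace Z]
    [ConnectedSpace Z] (h : ¬ SimplyConnectedSpace Z) :
    ¬ Nonempty (TopCone Z ≃ₜ (Metric.closedBall (0 : EuclideanSpace ℝ (Fin 4)) 1)) :=
  cone_not_homeomorphic_ball_general Z h
end

section
/- Let A : EuclideanSpace ℝ (Fin 3) → EuclideanSpace ℝ (Fin 3) be a surjective isometry such that A ∘ A = id, A(0) = 0, and 0 is an isolated fixed point of A (i.e. there is a punctured neighborhood of 0 containing no fixed points of A). Then A(u) = −u for every u ∈ EuclideanSpace ℝ (Fin 3). -/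
/-!
By the Mazur–Ulam theorem `A` is linear. The fixed points of a linear map form a subspace,
so if `0` is an isolated fixed point then `0` is the only one. For a linear involution `A`,
every `u + A u` is fixed, hence `u + A u = 0`.
-/

open Filter Topology

theorem Isometry.exists_linearIsometryEquiv_of_surjective {E F : Type*}
    [NormedAddCommGroup E] [NormedSpace ℝ E] [NormedAddCommGroup F] [NormedSpace ℝ F]
    {f : E → F} (hf : Isometry f) (hsurj : Function.Surjective f) (h0 : f 0 = 0) :
    ∃ L : E ≃ₗᵢ[ℝ] F, ⇑L = f :=
  let e : E ≃ᵢ F := ⟨Equiv.ofBijective f ⟨hf.injective, hsurj⟩, hf⟩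
  ⟨e.toRealLinearIsometryEquivOfMapZero h0, e.coe_toRealLinearIsometryEquivOfMapZero h0⟩

theorem eq_zero_of_apply_eq_self_of_isolated {𝕜 E F : Type*} [NontriviallyNormedField 𝕜]
    [AddCommGroup E] [Module 𝕜 E] [TopologicalSpace E] [ContinuousSMul 𝕜 E]
    [FunLike F E E] [LinearMapClass F 𝕜 E E] {f : F}
    (hisolated : ∃ U ∈ 𝓝 (0 : E), ∀ u ∈ U, u ≠ 0 → f u ≠ u) {x : E} (hx : f x = x) : x = 0 := by
  obtain ⟨U, hU, hUfix⟩ := hisolated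
  have hsmul : Tendsto (fun t : 𝕜 ↦ t • x) (𝓝[≠] 0) (𝓝 0) := by
    simpa using (tendsto_nhdsWithin_of_tendsto_nhds tendsto_id).smul_const (c := (0 : 𝕜)) x
  obtain ⟨t, htU, ht⟩ := ((hsmul.eventually hU).and self_mem_nhdsWithin).exists
  by_contra hne
  exact hUfix _ htU (smul_ne_zero ht hne) (by rw [map_smul, hx])

theorem apply_eq_neg_of_involutive {M F : Type*} [AddCommGroup M] [FunLike F M M]
    [AddMonoidHomClass F M M] {f : F} (hf : Function.Involutive f)
    (hfix : ∀ x, f x = x → x = 0) (x : M) : f x = -x :=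
  eq_neg_of_add_eq_zero_right <| hfix _ <| by rw [map_add, hf x, add_comm]

/-- A surjective isometric involution of Euclidean 3-space fixing the origin, whose
fixed point `0` is isolated (some punctured neighborhood of `0` contains no fixed
points), must be the antipodal map `u ↦ −u`. -/
theorem involution_isolated_fixed_point_eq_neg
    (A : EuclideanSpace ℝ (Fin 3) → EuclideanSpace ℝ (Fin 3))
    (hsurj : Function.Surjective A) (hiso : Isometry A) (hinvol : A ∘ A = id)
    (h0 : A 0 = 0)
    (hisolated : ∃ U ∈ nhds (0 : EuclideanSpace ℝ (Fin 3)), ∀ u ∈ U, u ≠ 0 → A u ≠ u) :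
    ∀ u, A u = -u := by
  obtain ⟨L, rfl⟩ := hiso.exists_linearIsometryEquiv_of_surjective hsurj h0
  exact apply_eq_neg_of_involutive (congrFun hinvol)
    (fun _ ↦ eq_zero_of_apply_eq_self_of_isolated hisolated)
end
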